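/- Let M = ⟨A | u = v⟩ with r compressing u = v, write u = ru', v = rv' with u', v' ∈ T(r) = Δ_r*, and let L = ⟨Δ_r | u' = v'⟩. For words s, s' ∈ A*r with left canonical factorizations s = y·r·w, s' = y'·r·w' (exhibiting the first occurrence of r), one has [s]_M = [s']_M if and only if y = y' and [w]_L = [w']_L. -/

import Mathlib

/-- The congruence on a free monoid generated by the single relation `u = v`. -/
def oneRelCon {A : Type*} (u v : FreeMonoid A) : Con (FreeMonoid A) :=
  conGen (fun a b => a = u ∧ b = v)

/-- `T(r) = {w ∈ A* : r·w ∈ A*·r}`. -/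
def Tset {A : Type*} (r : FreeMonoid A) : Set (FreeMonoid A) :=
  {w | ∃ y, r * w = y * r}

/-- `Δ_r`: the prefix code of irreducible elements of `T(r)`. -/
def Irr {A : Type*} (r : FreeMonoid A) : Set (FreeMonoid A) :=
  {w | w ∈ Tset r ∧ w ≠ 1 ∧ ¬ ∃ a b : FreeMonoid A,
        a ∈ Tset r ∧ b ∈ Tset r ∧ a ≠ 1 ∧ b ≠ 1 ∧ w = a * b}

/-- The canonical embedding `Δ_r* → A*` sending a word over the alphabet `Δ_r`
to its value in `A*`. -/
noncomputable def iotaΔ {A : Type*} (r : FreeMonoid A) :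
    FreeMonoid ↥(Irr r) →* FreeMonoid A :=
  FreeMonoid.lift fun b => (b : FreeMonoid A)

/-!
The triple `(y, [x]_L, z)` attached to a word `s` containing `r` — `s = y·r·t` at the first
occurrence of `r`, and `t = x·z` with `x` the longest prefix of `t` in `T(r) = Δ_r*` — is invariant
under the elementary moves `p·u·q ↔ p·v·q`. Indeed the first occurrence of `r` in `p·r·u'·q` lies
within `p·r`, so the tail is `m·u'·q` with `m ∈ T(r)`, and since `T(r)` is left unitary the longest
`T(r)`-prefix of `m·u'·q` is `m·u'·x₀`, where `x₀` is the longest one of `q`. As `T(r)` is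
freely generated by the prefix code `Δ_r`, its elements are words over `Δ_r`, and
`[m·u'·x₀]_L = [m·v'·x₀]_L`. For a left canonical factorization `s = y·r·w` the triple is
`(y, [w]_L, 1)`.
-/

open Function

namespace FreeMonoid

variable {α : Type*}

theorem mul_eq_mul_iff {a b c d : FreeMonoid α} :
    a * b = c * d ↔ (∃ e, c = a * e ∧ b = e * d) ∨ ∃ e, a = c * e ∧ d = e * b :=
  List.append_eq_append_iff

theorem eq_and_eq_of_mul_eq_mul {a b c d : FreeMonoid α} (h : a * b = c * d)
    (hl : a.length = c.length) : a = c ∧ b = d :=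
  List.append_inj h hl

theorem length_pos {a : FreeMonoid α} (h : a ≠ 1) : 0 < a.length :=
  Nat.pos_of_ne_zero (mt length_eq_zero.mp h)

end FreeMonoid

open FreeMonoid

theorem Function.argminOn_eq_iff {α β : Type*} [LinearOrder β] [WellFoundedLT β] {f : α → β}
    {s : Set α} (hs : s.Nonempty) (hf : s.InjOn f) {a : α} :
    argminOn f s hs = a ↔ a ∈ s ∧ ∀ b ∈ s, f a ≤ f b := by
  constructor
  · rintro rfl
    exact ⟨argminOn_mem f s hs, fun b hb => argminOn_le f s hb⟩
  · rintro ⟨ha, hmin⟩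
    exact hf (argminOn_mem f s hs) ha
      (le_antisymm (argminOn_le f s ha) (hmin _ (argminOn_mem f s hs)))

section Congruence

variable {M β : Type*} [Monoid M]

def contextKer (f : M → β) : Con M where
  r a b := ∀ x z, f (x * a * z) = f (x * b * z)
  iseqv := ⟨fun _ _ _ => rfl, fun h x z => (h x z).symm,
    fun h₁ h₂ x z => (h₁ x z).trans (h₂ x z)⟩
  mul' {a b c d} h₁ h₂ x z := by
    have h₂' : f (x * b * c * z) = f (x * b * d * z) := h₂ (x * b) z
    simpa only [mul_assoc] using (h₁ x (c * z)).trans (by simpa only [mul_assoc] using h₂')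

theorem apply_eq_of_oneRelCon {A : Type*} {f : FreeMonoid A → β} {u v : FreeMonoid A}
    (h : ∀ x z, f (x * u * z) = f (x * v * z)) {a b : FreeMonoid A} (hab : oneRelCon u v a b) :
    f a = f b := by
  have hle : oneRelCon u v ≤ contextKer f :=
    Con.conGen_le.mpr (by rintro _ _ ⟨rfl, rfl⟩; exact h)
  simpa using hle hab 1 1

end Congruence

section Words

variable {A : Type*} {r : FreeMonoid A}

theorem one_mem_Tset : (1 : FreeMonoid A) ∈ Tset r := ⟨1, by simp⟩

theorem mul_mem_Tset {a b : FreeMonoid A} (ha : a ∈ Tset r) (hb : b ∈ Tset r) :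
    a * b ∈ Tset r := by
  obtain ⟨x, hx⟩ := ha
  obtain ⟨y, hy⟩ := hb
  exact ⟨x * y, by rw [← mul_assoc, hx, mul_assoc, hy, mul_assoc]⟩

theorem mem_Tset_of_mul_eq {p y m : FreeMonoid A} (h : p * r = y * r * m) : m ∈ Tset r := by
  rw [mul_assoc] at h
  rcases mul_eq_mul_iff.mp h with ⟨e, -, he⟩ | ⟨e, -, he⟩
  · have hl := congrArg length he
    simp only [length_mul] at hl
    rw [length_eq_zero.mp (by omega : m.length = 0)]
    exact one_mem_Tset
  · exact ⟨e, he⟩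

theorem mem_Tset_of_mul_mem {a b : FreeMonoid A} (ha : a ∈ Tset r) (hab : a * b ∈ Tset r) :
    b ∈ Tset r := by
  obtain ⟨x, hx⟩ := ha
  obtain ⟨z, hz⟩ := hab
  exact mem_Tset_of_mul_eq (p := z) (y := x) (by rw [← hz, ← mul_assoc, hx])

theorem mem_closure_Irr_of_mem_Tset {w : FreeMonoid A} (hw : w ∈ Tset r) :
    w ∈ Submonoid.closure (Irr r) := by
  by_cases h1 : w = 1
  · exact h1 ▸ one_mem _
  by_cases hsplit : ∃ a b, a ∈ Tset r ∧ b ∈ Tset r ∧ a ≠ 1 ∧ b ≠ 1 ∧ w = a * b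
  · obtain ⟨a, b, ha, hb, ha1, hb1, rfl⟩ := hsplit
    have := length_pos ha1
    have := length_pos hb1
    have : a.length < (a * b).length := by rw [length_mul]; omega
    have : b.length < (a * b).length := by rw [length_mul]; omega
    exact mul_mem (mem_closure_Irr_of_mem_Tset ha) (mem_closure_Irr_of_mem_Tset hb)
  · exact Submonoid.subset_closure ⟨hw, h1, hsplit⟩
termination_by w.length

theorem mem_mrange_iotaΔ {w : FreeMonoid A} : w ∈ MonoidHom.mrange (iotaΔ r) ↔ w ∈ Tset r := by
  rw [iotaΔ, ← Submonoid.closure_eq_mrange]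
  refine ⟨fun hw => ?_, mem_closure_Irr_of_mem_Tset⟩
  induction hw using Submonoid.closure_induction with
  | mem x hx => exact hx.1
  | one => exact one_mem_Tset
  | mul x y _ _ hx hy => exact mul_mem_Tset hx hy

theorem iotaΔ_mem_Tset (c : FreeMonoid (Irr r)) : iotaΔ r c ∈ Tset r :=
  mem_mrange_iotaΔ.mp ⟨c, rfl⟩

@[simp]
theorem iotaΔ_of (d : Irr r) : iotaΔ r (of d) = d := rfl

theorem eq_of_mul_eq_mul_of_mem_Irr {d e s t : FreeMonoid A} (hd : d ∈ Irr r) (he : e ∈ Irr r)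
    (h : d * s = e * t) : d = e := by
  suffices ∀ {d e f : FreeMonoid A}, d ∈ Irr r → e ∈ Irr r → e = d * f → f = 1 by
    rcases mul_eq_mul_iff.mp h with ⟨f, hf, -⟩ | ⟨f, hf, -⟩
    · rw [hf, this hd he hf, mul_one]
    · rw [hf, this he hd hf, mul_one]
  intro d e f hd he hf
  by_contra hf1
  exact he.2.2 ⟨d, f, hd.1, mem_Tset_of_mul_mem hd.1 (hf ▸ he.1), hd.2.1, hf1, hf⟩

theorem iotaΔ_eq_one {c : FreeMonoid (Irr r)} : iotaΔ r c = 1 ↔ c = 1 := by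
  refine ⟨fun h => ?_, fun h => h ▸ map_one _⟩
  induction c using FreeMonoid.casesOn with
  | one => rfl
  | of_mul d c =>
    rw [map_mul, iotaΔ_of, ← length_eq_zero, length_mul] at h
    exact absurd (length_pos d.2.2.1) (by omega)

theorem iotaΔ_injective (r : FreeMonoid A) : Injective (iotaΔ r) := by
  intro c₁
  induction c₁ using FreeMonoid.inductionOn' with
  | one => exact fun c₂ h => (iotaΔ_eq_one.mp h.symm).symm
  | of_mul d c ih =>
    intro c₂ h
    induction c₂ using FreeMonoid.casesOn with
    | one => exact absurd (iotaΔ_eq_one.mp h) (by simp)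
    | of_mul e c₂ =>
      simp only [map_mul, iotaΔ_of] at h
      obtain rfl : d = e := Subtype.ext (eq_of_mul_eq_mul_of_mem_Irr d.2 e.2 h)
      rw [ih (mul_left_cancel h)]

-- A congruence because `r * T(r) ⊆ A* * r`.
def tailCon (r : FreeMonoid A) (c : Con (FreeMonoid A)) : Con (FreeMonoid (Irr r)) where
  r a b := c (r * iotaΔ r a) (r * iotaΔ r b)
  iseqv := ⟨fun _ => c.refl _, c.symm, c.trans⟩
  mul' {a b x z} hab hxz := by
    obtain ⟨y, hy⟩ := iotaΔ_mem_Tset b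
    have hb : c (r * iotaΔ r b * iotaΔ r x) (r * iotaΔ r b * iotaΔ r z) := by
      simpa only [hy, mul_assoc] using c.mul (c.refl y) hxz
    simpa only [map_mul, ← mul_assoc] using c.trans (c.mul hab (c.refl _)) hb

theorem oneRelCon_mul_iotaΔ {u' v' w w' : FreeMonoid (Irr r)} (h : oneRelCon u' v' w w') :
    oneRelCon (r * iotaΔ r u') (r * iotaΔ r v') (r * iotaΔ r w) (r * iotaΔ r w') := by
  have hle : oneRelCon u' v' ≤ tailCon r (oneRelCon (r * iotaΔ r u') (r * iotaΔ r v')) :=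
    Con.conGen_le.mpr (by rintro _ _ ⟨rfl, rfl⟩; exact ConGen.Rel.of _ _ ⟨rfl, rfl⟩)
  exact hle h

variable (r) in
def occurrences (s : FreeMonoid A) : Set (FreeMonoid A × FreeMonoid A) :=
  {yt | s = yt.1 * r * yt.2}

variable (r) in
def tFactorizations (t : FreeMonoid A) : Set (FreeMonoid A × FreeMonoid A) :=
  {xz | t = xz.1 * xz.2 ∧ xz.1 ∈ Tset r}

variable (r) in
open Classical in
noncomputable def firstOccurrence (s : FreeMonoid A) : Option (FreeMonoid A × FreeMonoid A) :=
  if h : (occurrences r s).Nonempty then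
    some (argminOn (fun yt => yt.1.length) (occurrences r s) h)
  else none

theorem tFactorizations_nonempty (t : FreeMonoid A) : (tFactorizations r t).Nonempty :=
  ⟨(1, t), (one_mul t).symm, one_mem_Tset⟩

variable (r) in
noncomputable def maxTPrefix (t : FreeMonoid A) : FreeMonoid A × FreeMonoid A :=
  argminOn (fun xz => xz.2.length) (tFactorizations r t) (tFactorizations_nonempty t)

theorem firstOccurrence_eq_some_iff {s y t : FreeMonoid A} :
    firstOccurrence r s = some (y, t) ↔
      s = y * r * t ∧ ∀ p q, s = p * r * q → y.length ≤ p.length := by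
  have hinj : (occurrences r s).InjOn fun yt => yt.1.length := by
    rintro ⟨y₁, t₁⟩ h₁ ⟨y₂, t₂⟩ h₂ hl
    obtain ⟨rfl, h⟩ := eq_and_eq_of_mul_eq_mul (c := y₂) (b := r * t₁) (d := r * t₂)
      (by simpa only [mul_assoc] using h₁.symm.trans h₂) hl
    rw [mul_left_cancel h]
  by_cases hs : (occurrences r s).Nonempty
  · rw [firstOccurrence, dif_pos hs, Option.some_inj, argminOn_eq_iff hs hinj]
    simp [occurrences]
  · rw [firstOccurrence, dif_neg hs]
    simp only [reduceCtorEq, false_iff, not_and]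
    exact fun h => absurd ⟨(y, t), h⟩ hs

theorem maxTPrefix_eq_iff {t x z : FreeMonoid A} :
    maxTPrefix r t = (x, z) ↔ t = x * z ∧ x ∈ Tset r ∧
      ∀ x' z', t = x' * z' → x' ∈ Tset r → z.length ≤ z'.length := by
  have hinj : (tFactorizations r t).InjOn fun xz => xz.2.length := by
    rintro ⟨x₁, z₁⟩ ⟨h₁, -⟩ ⟨x₂, z₂⟩ ⟨h₂, -⟩ hl
    have hl' : x₁.length = x₂.length := by
      have := congrArg length (h₁.symm.trans h₂)
      simp only [length_mul] at this hl
      omega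
    obtain ⟨rfl, rfl⟩ := eq_and_eq_of_mul_eq_mul (h₁.symm.trans h₂) hl'
    rfl
  rw [maxTPrefix, argminOn_eq_iff _ hinj]
  simp [tFactorizations, and_assoc]

theorem firstOccurrence_mul_of_eq_some {p y m : FreeMonoid A}
    (h : firstOccurrence r (p * r) = some (y, m)) (X : FreeMonoid A) :
    firstOccurrence r (p * r * X) = some (y, m * X) := by
  obtain ⟨hpr, hmin⟩ := firstOccurrence_eq_some_iff.mp h
  refine firstOccurrence_eq_some_iff.mpr ⟨by rw [hpr, mul_assoc _ m], fun p' q' h' => ?_⟩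
  rcases mul_eq_mul_iff.mp h' with ⟨e, he, -⟩ | ⟨e, he, -⟩
  · have := congrArg length he
    simp only [length_mul] at this
    have := hmin p 1 (mul_one _).symm
    omega
  · exact hmin p' e he

theorem exists_firstOccurrence_mul_self (p : FreeMonoid A) :
    ∃ y m, firstOccurrence r (p * r) = some (y, m) := by
  rw [firstOccurrence, dif_pos ⟨(p, 1), (mul_one _).symm⟩]
  exact ⟨_, _, rfl⟩

theorem maxTPrefix_mul {a t x z : FreeMonoid A} (ha : a ∈ Tset r) (h : maxTPrefix r t = (x, z)) :
    maxTPrefix r (a * t) = (a * x, z) := by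
  obtain ⟨rfl, hx, hmin⟩ := maxTPrefix_eq_iff.mp h
  refine maxTPrefix_eq_iff.mpr
    ⟨(mul_assoc _ _ _).symm, mul_mem_Tset ha hx, fun x' z' h' hx' => ?_⟩
  rcases mul_eq_mul_iff.mp h' with ⟨e, rfl, he⟩ | ⟨e, rfl, he⟩
  · exact hmin e z' he (mem_Tset_of_mul_mem ha hx')
  · simp only [he, length_mul]
    omega

theorem maxTPrefix_of_mem {t : FreeMonoid A} (ht : t ∈ Tset r) : maxTPrefix r t = (t, 1) :=
  maxTPrefix_eq_iff.mpr ⟨(mul_one t).symm, ht, fun _ _ _ _ => Nat.zero_le _⟩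

variable (r) in
noncomputable def leftCanonicalData (c : Con (FreeMonoid (Irr r))) (s : FreeMonoid A) :
    Option (FreeMonoid A × c.Quotient × FreeMonoid A) :=
  (firstOccurrence r s).map fun yt =>
    (yt.1, ((invFun (iotaΔ r) (maxTPrefix r yt.2).1 : FreeMonoid (Irr r)) : c.Quotient),
      (maxTPrefix r yt.2).2)

theorem exists_leftCanonicalData_mul_iotaΔ_mul (c : Con (FreeMonoid (Irr r)))
    (x z : FreeMonoid A) : ∃ y cx cz z', ∀ w, leftCanonicalData r c (x * (r * iotaΔ r w) * z) =
      some (y, ((cx * w * cz : FreeMonoid (Irr r)) : c.Quotient), z') := by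
  obtain ⟨y, m, hym⟩ := exists_firstOccurrence_mul_self (r := r) x
  obtain ⟨cx, rfl⟩ :=
    mem_mrange_iotaΔ.mpr (mem_Tset_of_mul_eq (firstOccurrence_eq_some_iff.mp hym).1)
  rcases hz : maxTPrefix r z with ⟨x', z'⟩
  obtain ⟨cz, rfl⟩ := mem_mrange_iotaΔ.mpr (maxTPrefix_eq_iff.mp hz).2.1
  refine ⟨y, cx, cz, z', fun w => ?_⟩
  have hT := mul_mem_Tset (iotaΔ_mem_Tset cx) (iotaΔ_mem_Tset w)
  rw [leftCanonicalData, show x * (r * iotaΔ r w) * z = x * r * (iotaΔ r w * z) by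
    simp only [mul_assoc], firstOccurrence_mul_of_eq_some hym, Option.map_some, ← mul_assoc,
    maxTPrefix_mul hT hz, ← map_mul, ← map_mul, leftInverse_invFun (iotaΔ_injective r)]

theorem leftCanonicalData_eq_of_rel {c : Con (FreeMonoid (Irr r))} {u' v' : FreeMonoid (Irr r)}
    (h : c u' v') (x z : FreeMonoid A) :
    leftCanonicalData r c (x * (r * iotaΔ r u') * z) =
      leftCanonicalData r c (x * (r * iotaΔ r v') * z) := by
  obtain ⟨y, cx, cz, z', hdata⟩ := exists_leftCanonicalData_mul_iotaΔ_mul c x z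
  rw [hdata, hdata, c.eq.mpr (c.mul (c.mul (c.refl cx) h) (c.refl cz))]

theorem leftCanonicalData_eq_of_minimal (c : Con (FreeMonoid (Irr r))) {y : FreeMonoid A}
    {w : FreeMonoid (Irr r)}
    (hy : ∀ p, (∃ q, y * r * iotaΔ r w = p * r * q) → y.length ≤ p.length) :
    leftCanonicalData r c (y * r * iotaΔ r w) = some (y, (w : c.Quotient), 1) := by
  rw [leftCanonicalData, firstOccurrence_eq_some_iff.mpr ⟨rfl, fun p q h => hy p ⟨q, h⟩⟩,
    Option.map_some, maxTPrefix_of_mem (iotaΔ_mem_Tset w),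
    leftInverse_invFun (iotaΔ_injective r)]

end Words

theorem left_canonical_factorization_general {A : Type*} (u v r : FreeMonoid A)
    (u' v' : FreeMonoid ↥(Irr r))
    (hu : u = r * iotaΔ r u') (hv : v = r * iotaΔ r v') :
    ∀ (y y' : FreeMonoid A) (w w' : FreeMonoid ↥(Irr r)),
      (∀ p : FreeMonoid A, (∃ q, y * r * iotaΔ r w = p * r * q) → y.length ≤ p.length) →
      (∀ p : FreeMonoid A, (∃ q, y' * r * iotaΔ r w' = p * r * q) → y'.length ≤ p.length) →
      (oneRelCon u v (y * r * iotaΔ r w) (y' * r * iotaΔ r w') ↔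
        (y = y' ∧ oneRelCon u' v' w w')) := by
  intro y y' w w' hy hy'
  subst hu hv
  constructor
  · intro h
    have hdata := apply_eq_of_oneRelCon
      (leftCanonicalData_eq_of_rel (c := oneRelCon u' v') (ConGen.Rel.of u' v' ⟨rfl, rfl⟩)) h
    rw [leftCanonicalData_eq_of_minimal _ hy, leftCanonicalData_eq_of_minimal _ hy'] at hdata
    simpa only [Option.some.injEq, Prod.mk.injEq, Con.eq, and_true] using hdata
  · rintro ⟨rfl, hw⟩
    simpa only [mul_assoc] using
      (oneRelCon _ _).mul ((oneRelCon _ _).refl y) (oneRelCon_mul_iotaΔ hw)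

/-- Let `M = ⟨A | u = v⟩` with `r` compressing `u = v`, write
`u = r·u'`, `v = r·v'` with `u', v' ∈ Δ_r*`, and let `L = ⟨Δ_r | u' = v'⟩`.
For `s = y·r·w`, `s' = y'·r·w'` left canonical factorizations (the displayed `r`
is the first occurrence of `r`, and `w, w' ∈ Δ_r*`), one has `[s]_M = [s']_M` iff
`y = y'` and `[w]_L = [w']_L`. -/
theorem left_canonical_factorization {A : Type*} (u v r : FreeMonoid A) (hr : r ≠ 1)
    (hur : ∃ a, u = a * r) (hvr : ∃ a, v = a * r)
    (u' v' : FreeMonoid ↥(Irr r))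
    (hu : u = r * iotaΔ r u') (hv : v = r * iotaΔ r v') :
    ∀ (y y' : FreeMonoid A) (w w' : FreeMonoid ↥(Irr r)),
      (∀ p : FreeMonoid A, (∃ q, y * r * iotaΔ r w = p * r * q) → y.length ≤ p.length) →
      (∀ p : FreeMonoid A, (∃ q, y' * r * iotaΔ r w' = p * r * q) → y'.length ≤ p.length) →
      (oneRelCon u v (y * r * iotaΔ r w) (y' * r * iotaΔ r w') ↔
        (y = y' ∧ oneRelCon u' v' w w')) :=
  left_canonical_factorization_general u v r u' v' hu hv
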